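/- The set S = {(a,b) ∈ A² : neither a ⪯ b nor b ⪯ a} is a subuniverse of (A, w^A)²: whenever (a₁,b₁), (a₂,b₂), (a₃,b₃) ∈ S, also (w^A(a₁,a₂,a₃), w^A(b₁,b₂,b₃)) ∈ S. -/
import Mathlib


/-- Formal terms built from variables in `V` and a single ternary operation symbol `w`. -/
inductive Term3 (V : Type) : Type
  | var : V → Term3 V
  | w : Term3 V → Term3 V → Term3 V → Term3 V
deriving DecidableEq

/-- Evaluation of a term in an algebra `(B, f)` under a variable assignment `σ`. -/
def Term3.eval {V B : Type} (f : B → B → B → B) (σ : V → B) : Term3 V → B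
  | .var v => σ v
  | .w a b c => f (a.eval f σ) (b.eval f σ) (c.eval f σ)

/-- Renaming/substitution of variables in a term. -/
def Term3.rename {V V' : Type} (ρ : V → V') : Term3 V → Term3 V'
  | .var v => .var (ρ v)
  | .w a b c => .w (a.rename ρ) (b.rename ρ) (c.rename ρ)

/-- A ternary operation `f` satisfies the 3-wnu identities:
`f(x,x,x) = x` and `f(x,x,y) = f(x,y,x) = f(y,x,x)`. -/
def Is3WNU {B : Type} (f : B → B → B → B) : Prop :=
  (∀ x, f x x x = x) ∧ ∀ x y, f x x y = f x y x ∧ f x y x = f y x x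

/-- Two terms are equal modulo the equational theory generated by the 3-wnu identities,
i.e. they evaluate equally in every algebra satisfying the 3-wnu identities. -/
def EqWnu3 {V : Type} (t s : Term3 V) : Prop :=
  ∀ (B : Type) (f : B → B → B → B) (σ : V → B), Is3WNU f → t.eval f σ = s.eval f σ

/-- The set `A` of 3-wnu normal forms (over the countably infinite variable set `ℕ`):
every variable is a normal form, and `w(a₁,a₂,a₃)` is a normal form whenever
`a₁,a₂,a₃` are normal forms with `a₁ ≠ a₂` and `a₁ ≠ a₃`. -/
inductive IsNF3 : Term3 ℕ → Prop
  | var (n : ℕ) : IsNF3 (.var n)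
  | w (a b c : Term3 ℕ) : IsNF3 a → IsNF3 b → IsNF3 c → a ≠ b → a ≠ c →
      IsNF3 (.w a b c)

/-- The normal-form operation `w^A`:
`w^A(a,a,a) = a`; `w^A(a,a,b) = w^A(a,b,a) = w^A(b,a,a) = w(b,a,a)` for `a ≠ b`;
and `w^A(a₁,a₂,a₃) = w(a₁,a₂,a₃)` for pairwise distinct `a₁,a₂,a₃`. -/
def wA3 (a b c : Term3 ℕ) : Term3 ℕ :=
  if a = b then (if b = c then a else .w c a a)
  else if a = c then .w b a a
  else if b = c then .w a b b
  else .w a b c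

/-- The subterm relation `⪯` on normal forms: the reflexive transitive closure of
`{(a,b) : a,b ∈ A, ∃ c d e ∈ A, b = w(c,d,e) ∧ a ∈ {c,d,e}}`. -/
def Sub3 (a b : Term3 ℕ) : Prop :=
  Relation.ReflTransGen
    (fun s t => IsNF3 s ∧ IsNF3 t ∧ ∃ c d e : Term3 ℕ,
      IsNF3 c ∧ IsNF3 d ∧ IsNF3 e ∧ t = .w c d e ∧ (s = c ∨ s = d ∨ s = e)) a b

/-- The relation `S = {(a,b) ∈ A² : neither a ⪯ b nor b ⪯ a}`. -/
def S3 (a b : Term3 ℕ) : Prop :=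
  IsNF3 a ∧ IsNF3 b ∧ ¬ Sub3 a b ∧ ¬ Sub3 b a

/-- Plain syntactic subterm relation. -/
inductive Subt : Term3 ℕ → Term3 ℕ → Prop
  | refl (a) : Subt a a
  | left {x a b c} : Subt x a → Subt x (.w a b c)
  | mid {x a b c} : Subt x b → Subt x (.w a b c)
  | right {x a b c} : Subt x c → Subt x (.w a b c)

lemma Subt.trans' {a b c : Term3 ℕ} (h1 : Subt a b) (h2 : Subt b c) : Subt a c := by
  induction h2 with
  | refl => exact h1
  | left _ ih => exact .left ih
  | mid _ ih => exact .mid ih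
  | right _ ih => exact .right ih

lemma nf_of_subt {x t : Term3 ℕ} (h : Subt x t) (ht : IsNF3 t) : IsNF3 x := by
  induction h with
  | refl => exact ht
  | left _ ih => cases ht with | w _ _ _ ha hb hc _ _ => exact ih ha
  | mid _ ih => cases ht with | w _ _ _ ha hb hc _ _ => exact ih hb
  | right _ ih => cases ht with | w _ _ _ ha hb hc _ _ => exact ih hc

lemma sub3_to_subt {a b : Term3 ℕ} (h : Sub3 a b) : Subt a b := by
  induction h with
  | refl => exact .refl a
  | tail _ hstep ih =>
    obtain ⟨_, _, c, d, e, _, _, _, rfl, hmem⟩ := hstep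
    rcases hmem with rfl | rfl | rfl
    · exact .left ih
    · exact .mid ih
    · exact .right ih

lemma nf_of_sub3 {x p : Term3 ℕ} (h : Sub3 x p) (hp : IsNF3 p) : IsNF3 x := by
  rcases Relation.ReflTransGen.cases_head h with rfl | ⟨c, hrel, _⟩
  · exact hp
  · exact hrel.1

lemma subt_to_sub3_aux {a b : Term3 ℕ} (h : Subt a b) : IsNF3 b → Sub3 a b := by
  induction h with
  | refl => exact fun _ => Relation.ReflTransGen.refl
  | @left p q r _ ih =>
    intro hb
    cases hb with
    | w _ _ _ hp hq hr hn1 hn2 =>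
      have hxp := ih hp
      exact Relation.ReflTransGen.tail hxp
        ⟨hp, IsNF3.w _ _ _ hp hq hr hn1 hn2, p, q, r, hp, hq, hr, rfl, Or.inl rfl⟩
  | @mid p q r _ ih =>
    intro hb
    cases hb with
    | w _ _ _ hp hq hr hn1 hn2 =>
      have hxq := ih hq
      exact Relation.ReflTransGen.tail hxq
        ⟨hq, IsNF3.w _ _ _ hp hq hr hn1 hn2, p, q, r, hp, hq, hr, rfl,
          Or.inr (Or.inl rfl)⟩
  | @right p q r _ ih =>
    intro hb
    cases hb with
    | w _ _ _ hp hq hr hn1 hn2 =>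
      have hxr := ih hr
      exact Relation.ReflTransGen.tail hxr
        ⟨hr, IsNF3.w _ _ _ hp hq hr hn1 hn2, p, q, r, hp, hq, hr, rfl,
          Or.inr (Or.inr rfl)⟩

lemma subt_to_sub3 {a b : Term3 ℕ} (hb : IsNF3 b) (h : Subt a b) : Sub3 a b :=
  subt_to_sub3_aux h hb

lemma nf_wA3 {a b c : Term3 ℕ} (ha : IsNF3 a) (hb : IsNF3 b) (hc : IsNF3 c) :
    IsNF3 (wA3 a b c) := by
  unfold wA3
  split_ifs with h1 h2 h3 h4
  · exact ha
  · exact IsNF3.w _ _ _ hc ha ha (fun h => h2 (h1 ▸ h.symm)) (fun h => h2 (h1 ▸ h.symm))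
  · exact IsNF3.w _ _ _ hb ha ha (fun h => h1 h.symm) (fun h => h1 h.symm)
  · exact IsNF3.w _ _ _ ha hb hb h1 h1
  · exact IsNF3.w _ _ _ ha hb hc h1 h3

lemma subt_arg1 (a b c : Term3 ℕ) : Subt a (wA3 a b c) := by
  unfold wA3; split_ifs with h1 h2 h3 h4
  · exact .refl a
  · exact .mid (.refl a)
  · exact .mid (.refl a)
  · exact .left (.refl a)
  · exact .left (.refl a)

lemma subt_arg2 (a b c : Term3 ℕ) : Subt b (wA3 a b c) := by
  unfold wA3; split_ifs with h1 h2 h3 h4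
  · rw [h1]; exact .refl b
  · rw [h1]; exact .mid (.refl b)
  · exact .left (.refl b)
  · exact .mid (.refl b)
  · exact .mid (.refl b)

lemma subt_arg3 (a b c : Term3 ℕ) : Subt c (wA3 a b c) := by
  unfold wA3; split_ifs with h1 h2 h3 h4
  · rw [h1, h2]; exact .refl c
  · exact .left (.refl c)
  · rw [h3]; exact .mid (.refl c)
  · rw [h4]; exact .mid (.refl c)
  · exact .right (.refl c)

lemma subt_w_inv {x p q r : Term3 ℕ} (h : Subt x (.w p q r)) :
    x = Term3.w p q r ∨ Subt x p ∨ Subt x q ∨ Subt x r := by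
  cases h with
  | refl => exact Or.inl rfl
  | left h => exact Or.inr (Or.inl h)
  | mid h => exact Or.inr (Or.inr (Or.inl h))
  | right h => exact Or.inr (Or.inr (Or.inr h))

lemma subt_wA3_inv {x a b c : Term3 ℕ} (h : Subt x (wA3 a b c)) :
    x = wA3 a b c ∨ Subt x a ∨ Subt x b ∨ Subt x c := by
  unfold wA3 at h ⊢
  split_ifs at h ⊢ with h1 h2 h3 h4
  · exact Or.inr (Or.inl h)
  · rcases subt_w_inv h with h | h | h | h
    · exact Or.inl h
    · exact Or.inr (Or.inr (Or.inr h))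
    · exact Or.inr (Or.inl h)
    · exact Or.inr (Or.inl h)
  · rcases subt_w_inv h with h | h | h | h
    · exact Or.inl h
    · exact Or.inr (Or.inr (Or.inl h))
    · exact Or.inr (Or.inl h)
    · exact Or.inr (Or.inl h)
  · rcases subt_w_inv h with h | h | h | h
    · exact Or.inl h
    · exact Or.inr (Or.inl h)
    · exact Or.inr (Or.inr (Or.inl h))
    · exact Or.inr (Or.inr (Or.inl h))
  · rcases subt_w_inv h with h | h | h | h
    · exact Or.inl h
    · exact Or.inr (Or.inl h)
    · exact Or.inr (Or.inr (Or.inl h))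
    · exact Or.inr (Or.inr (Or.inr h))

lemma wA3_spec (a b c : Term3 ℕ) :
    (a = b ∧ b = c ∧ wA3 a b c = a) ∨
    (a = b ∧ b ≠ c ∧ wA3 a b c = .w c a a) ∨
    (a ≠ b ∧ a = c ∧ wA3 a b c = .w b a a) ∨
    (a ≠ b ∧ a ≠ c ∧ b = c ∧ wA3 a b c = .w a b b) ∨
    (a ≠ b ∧ a ≠ c ∧ b ≠ c ∧ wA3 a b c = .w a b c) := by
  unfold wA3; split_ifs with h1 h2 h3 h4 <;> tauto

lemma wA3_ne {a₁ a₂ a₃ b₁ b₂ b₃ : Term3 ℕ}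
    (na1 : IsNF3 a₁) (nb1 : IsNF3 b₁)
    (hab1 : ¬ Sub3 a₁ b₁) (hba1 : ¬ Sub3 b₁ a₁)
    (e2 : a₂ ≠ b₂) (e3 : a₃ ≠ b₃) :
    wA3 a₁ a₂ a₃ ≠ wA3 b₁ b₂ b₃ := by
  have e1 : a₁ ≠ b₁ := fun h => hab1 (h ▸ Relation.ReflTransGen.refl)
  intro heq
  rcases wA3_spec a₁ a₂ a₃ with ⟨p1, p2, hL⟩ | ⟨p1, p2, hL⟩ | ⟨p1, p2, hL⟩ |
      ⟨p1, p2, p3, hL⟩ | ⟨p1, p2, p3, hL⟩ <;>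
    rcases wA3_spec b₁ b₂ b₃ with ⟨q1, q2, hR⟩ | ⟨q1, q2, hR⟩ | ⟨q1, q2, hR⟩ |
      ⟨q1, q2, q3, hR⟩ | ⟨q1, q2, q3, hR⟩ <;>
    rw [hL, hR] at heq <;>
    first
      | exact hba1 (subt_to_sub3 na1 (show Subt b₁ a₁ by
          rw [heq]
          first
            | exact Subt.refl _
            | exact Subt.left (Subt.refl _)
            | exact Subt.mid (Subt.refl _)))
      | exact hab1 (subt_to_sub3 nb1 (show Subt a₁ b₁ by
          rw [← heq]
          first
            | exact Subt.left (Subt.refl _)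
            | exact Subt.mid (Subt.refl _)))
      | simp_all

/-- The set `S` is a subuniverse of `(A, w^A)²`: whenever
`(a₁,b₁), (a₂,b₂), (a₃,b₃) ∈ S`, also `(w^A(a₁,a₂,a₃), w^A(b₁,b₂,b₃)) ∈ S`. -/
theorem statement11 (a₁ b₁ a₂ b₂ a₃ b₃ : Term3 ℕ)
    (h1 : S3 a₁ b₁) (h2 : S3 a₂ b₂) (h3 : S3 a₃ b₃) :
    S3 (wA3 a₁ a₂ a₃) (wA3 b₁ b₂ b₃) := by
  obtain ⟨na1, nb1, hab1, hba1⟩ := h1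
  obtain ⟨na2, nb2, hab2, hba2⟩ := h2
  obtain ⟨na3, nb3, hab3, hba3⟩ := h3
  have e2 : a₂ ≠ b₂ := fun h => hab2 (h ▸ Relation.ReflTransGen.refl)
  have e3 : a₃ ≠ b₃ := fun h => hab3 (h ▸ Relation.ReflTransGen.refl)
  refine ⟨nf_wA3 na1 na2 na3, nf_wA3 nb1 nb2 nb3, ?_, ?_⟩
  · intro h
    rcases subt_wA3_inv (sub3_to_subt h) with heq | h | h | h
    · exact wA3_ne na1 nb1 hab1 hba1 e2 e3 heq
    · exact hab1 (subt_to_sub3 nb1 ((subt_arg1 a₁ a₂ a₃).trans' h))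
    · exact hab2 (subt_to_sub3 nb2 ((subt_arg2 a₁ a₂ a₃).trans' h))
    · exact hab3 (subt_to_sub3 nb3 ((subt_arg3 a₁ a₂ a₃).trans' h))
  · intro h
    rcases subt_wA3_inv (sub3_to_subt h) with heq | h | h | h
    · exact wA3_ne nb1 na1 hba1 hab1 (Ne.symm e2) (Ne.symm e3) heq
    · exact hba1 (subt_to_sub3 na1 ((subt_arg1 b₁ b₂ b₃).trans' h))
    · exact hba2 (subt_to_sub3 na2 ((subt_arg2 b₁ b₂ b₃).trans' h))
    · exact hba3 (subt_to_sub3 na3 ((subt_arg3 b₁ b₂ b₃).trans' h))
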